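/- arXiv:2205.02295 — 10 statements merged into one kernel-verified Lean document; each statement's English description precedes it below -/
import Mathlib

section
/- Let x : Fin h × Fin w × T → {0,1} be a binary assignment. Then x satisfies (i) for every color ℓ, every column j and every pair of consecutive rows i, i+1: ∑_{k∈T, s(k)=ℓ} x(i,j,k) = ∑_{k∈T, n(k)=ℓ} x(i+1,j,k); (ii) for every color ℓ, every row i and every pair of consecutive columns j, j+1: ∑_{k∈T, e(k)=ℓ} x(i,j,k) = ∑_{k∈T, w(k)=ℓ} x(i,j+1,k); (iii) ∑_{k∈T} x(i,j,k) = 1 for every cell (i,j) lying in the first or last row; and (iv) ∑_{k∈T} x(i,j,k) = 1 for every cell (i,j) lying in the first or last column — if and only if there exists a valid complete tiling τ : Fin h × Fin w → T with x(i,j,k) = 1 ⟺ τ(i,j) = k. In particular, constraints (i)–(iv) force ∑_{k∈T} x(i,j,k) = 1 at every interior cell as well. -/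
/-!
Summing a color-balance constraint over all colors shows that the number of tiles placed
in a cell is the same as in the cell below it, so the first-row constraint propagates down
every column and each cell carries exactly one tile. A binary assignment with one tile per
cell is the indicator of a tiling τ, and on indicators the color-balance constraint for two
adjacent cells says precisely that the colors of τ on their common edge agree.
-/

/-- Feasibility for the decision formulation (8): color-balance adjacency constraints
plus the one-tile-per-cell constraints on the first/last rows and columns. -/
def WangFeasible {C T : Type} [Fintype T] [DecidableEq C]
    {h w : ℕ} (tn tw ts te : T → C) (x : Fin h → Fin w → T → ℕ) : Prop :=
  (∀ (i : Fin h) (j : Fin w) (hi : i.val + 1 < h) (ℓ : C),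
      (∑ k : T, if ts k = ℓ then x i j k else 0) =
        ∑ k : T, if tn k = ℓ then x ⟨i.val + 1, hi⟩ j k else 0) ∧
  (∀ (i : Fin h) (j : Fin w) (hj : j.val + 1 < w) (ℓ : C),
      (∑ k : T, if te k = ℓ then x i j k else 0) =
        ∑ k : T, if tw k = ℓ then x i ⟨j.val + 1, hj⟩ k else 0) ∧
  (∀ (i : Fin h) (j : Fin w), (i.val = 0 ∨ i.val = h - 1) → (∑ k : T, x i j k) = 1) ∧
  (∀ (i : Fin h) (j : Fin w), (j.val = 0 ∨ j.val = w - 1) → (∑ k : T, x i j k) = 1)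

open Finset

section FiberSums

variable {C T M : Type} [Fintype T] [DecidableEq C] [AddCommMonoid M]

theorem sum_eq_sum_of_fiber_sums_eq {f f' : T → C} {g g' : T → M}
    (H : ∀ ℓ, (∑ k, if f k = ℓ then g k else 0) = ∑ k, if f' k = ℓ then g' k else 0) :
    ∑ k, g k = ∑ k, g' k := by
  let S : Finset C := univ.image f ∪ univ.image f'
  have hf : ∀ k ∈ univ, f k ∈ S :=
    fun k _ => mem_union_left _ (mem_image_of_mem f (mem_univ k))
  have hf' : ∀ k ∈ univ, f' k ∈ S :=
    fun k _ => mem_union_right _ (mem_image_of_mem f' (mem_univ k))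
  rw [← sum_fiberwise_of_maps_to hf, ← sum_fiberwise_of_maps_to hf']
  exact sum_congr rfl fun ℓ _ => by simpa only [sum_filter] using H ℓ

theorem fiber_sum_indicator [DecidableEq T] (f : T → C) (a : T) (ℓ : C) :
    (∑ k, if f k = ℓ then (if a = k then 1 else 0) else 0) =
      if f a = ℓ then (1 : ℕ) else 0 := by
  rw [sum_eq_single a] <;> simp +contextual [eq_comm]

theorem fiber_sums_indicator_eq_iff [DecidableEq T] {f f' : T → C} {a b : T} :
    (∀ ℓ, (∑ k, if f k = ℓ then (if a = k then 1 else 0) else 0) =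
        ∑ k, if f' k = ℓ then (if b = k then 1 else 0) else 0) ↔ f a = f' b := by
  simp only [fiber_sum_indicator]
  exact ⟨fun H => by simpa [eq_comm] using H (f a), fun H ℓ => by rw [H]⟩

end FiberSums

section Binary

variable {T : Type} [DecidableEq T] {g : T → ℕ}

theorem exists_eq_indicator_of_sum_eq_one [Fintype T] (hb : ∀ k, g k = 0 ∨ g k = 1)
    (hs : ∑ k, g k = 1) :
    ∃ a, ∀ k, g k = if a = k then 1 else 0 := by
  obtain ⟨a, -, ha⟩ := exists_ne_zero_of_sum_ne_zero (hs.trans_ne one_ne_zero)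
  have ha1 : g a = 1 := (hb a).resolve_left ha
  have hrest : ∑ k ∈ univ.erase a, g k = 0 := by
    have := add_sum_erase univ g (mem_univ a)
    omega
  refine ⟨a, fun k => ?_⟩
  split_ifs with hk
  · exact hk ▸ ha1
  · exact sum_eq_zero_iff.1 hrest k (mem_erase.2 ⟨Ne.symm hk, mem_univ k⟩)

theorem eq_indicator_of_eq_one_iff (hb : ∀ k, g k = 0 ∨ g k = 1) {a : T}
    (ha : ∀ k, g k = 1 ↔ a = k) (k : T) : g k = if a = k then 1 else 0 := by
  split_ifs with hk
  · exact (ha k).2 hk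
  · exact (hb k).resolve_right (mt (ha k).1 hk)

end Binary

section Tilings

variable {C T : Type} [Fintype T] [DecidableEq C] {h w : ℕ} {tn tw ts te : T → C}

def IsValidWangTiling (tn tw ts te : T → C) (τ : Fin h → Fin w → T) : Prop :=
  (∀ (i : Fin h) (j : Fin w) (hi : i.val + 1 < h),
      ts (τ i j) = tn (τ ⟨i.val + 1, hi⟩ j)) ∧
  (∀ (i : Fin h) (j : Fin w) (hj : j.val + 1 < w),
      te (τ i j) = tw (τ i ⟨j.val + 1, hj⟩))

def tilingIndicator [DecidableEq T] (τ : Fin h → Fin w → T) : Fin h → Fin w → T → ℕ :=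
  fun i j k => if τ i j = k then 1 else 0

theorem wangFeasible_tilingIndicator_iff [DecidableEq T] {τ : Fin h → Fin w → T} :
    WangFeasible tn tw ts te (tilingIndicator τ) ↔ IsValidWangTiling tn tw ts te τ := by
  simp [WangFeasible, IsValidWangTiling, tilingIndicator, fiber_sums_indicator_eq_iff]

theorem WangFeasible.sum_eq_one {x : Fin h → Fin w → T → ℕ}
    (hf : WangFeasible tn tw ts te x) (i : Fin h) (j : Fin w) : ∑ k, x i j k = 1 := by
  obtain ⟨hvert, -, hrows, -⟩ := hf
  obtain ⟨n, hn⟩ := i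
  induction n with
  | zero => exact hrows ⟨0, hn⟩ j (Or.inl rfl)
  | succ m ih =>
    rw [← sum_eq_sum_of_fiber_sums_eq (hvert ⟨m, by omega⟩ j hn)]
    exact ih (by omega)

end Tilings

/-- a binary assignment satisfies the constraints of the decision
program (8) iff it is the indicator of a valid complete tiling; in particular the
constraints force exactly one tile at every cell. -/
theorem stmt_0 {C T : Type} [Fintype T] [DecidableEq C]
    {h w : ℕ} (tn tw ts te : T → C)
    (x : Fin h → Fin w → T → ℕ)
    (hx : ∀ i j k, x i j k = 0 ∨ x i j k = 1) :
    (WangFeasible tn tw ts te x ↔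
      ∃ τ : Fin h → Fin w → T,
        (∀ (i : Fin h) (j : Fin w) (hi : i.val + 1 < h),
          ts (τ i j) = tn (τ ⟨i.val + 1, hi⟩ j)) ∧
        (∀ (i : Fin h) (j : Fin w) (hj : j.val + 1 < w),
          te (τ i j) = tw (τ i ⟨j.val + 1, hj⟩)) ∧
        (∀ i j k, x i j k = 1 ↔ τ i j = k)) ∧
    (WangFeasible tn tw ts te x →
      ∀ (i : Fin h) (j : Fin w), (∑ k : T, x i j k) = 1) := by
  classical
  refine ⟨⟨fun hf => ?_, ?_⟩, WangFeasible.sum_eq_one⟩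
  · choose τ hτ using fun i j => exists_eq_indicator_of_sum_eq_one (hx i j) (hf.sum_eq_one i j)
    obtain rfl : x = tilingIndicator τ := funext fun i => funext fun j => funext (hτ i j)
    obtain ⟨hvert, hhor⟩ := wangFeasible_tilingIndicator_iff.1 hf
    exact ⟨τ, hvert, hhor, fun i j k => by simp [tilingIndicator]⟩
  · rintro ⟨τ, hvert, hhor, hind⟩
    obtain rfl : x = tilingIndicator τ :=
      funext fun i => funext fun j => funext (eq_indicator_of_eq_one_iff (hx i j) (hind i j))
    exact wangFeasible_tilingIndicator_iff.2 ⟨hvert, hhor⟩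
end

section
/- Let x : Fin h × Fin w × T → {0,1} be a binary assignment. Then x satisfies (i) ∑_{k∈T} x(i,j,k) ≤ 1 for every cell (i,j); (ii) for every color ℓ and horizontally consecutive cells (i,j), (i,j+1): ∑_{k∈T, e(k)=ℓ} x(i,j,k) + ∑_{k∈T, w(k)≠ℓ} x(i,j+1,k) ≤ 1; and (iii) for every color ℓ and vertically consecutive cells (i,j), (i+1,j): ∑_{k∈T, s(k)=ℓ} x(i,j,k) + ∑_{k∈T, n(k)≠ℓ} x(i+1,j,k) ≤ 1 — if and only if the partial tiling τ : Fin h × Fin w → Option T, defined by τ(i,j) = some k when x(i,j,k) = 1 and τ(i,j) = none when ∑_k x(i,j,k) = 0, is a valid partial tiling. Moreover ∑_{i,j,k} x(i,j,k) equals the cover size of τ. -/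
/-- Validity of a partial tiling: adjacent cells that both hold tiles must have
matching colors on their shared edge. -/
def ValidPartial {C T : Type} {h w : ℕ} (tn tw ts te : T → C)
    (τ : Fin h → Fin w → Option T) : Prop :=
  (∀ (i : Fin h) (j : Fin w) (hi : i.val + 1 < h) (p q : T),
      τ i j = some p → τ ⟨i.val + 1, hi⟩ j = some q → ts p = tn q) ∧
  (∀ (i : Fin h) (j : Fin w) (hj : j.val + 1 < w) (p q : T),
      τ i j = some p → τ i ⟨j.val + 1, hj⟩ = some q → te p = tw q)

/-- Number of cells holding a tile. -/
def coverSize {T : Type} {h w : ℕ} (τ : Fin h → Fin w → Option T) : ℕ :=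
  (Finset.univ.filter fun p : Fin h × Fin w => (τ p.1 p.2).isSome).card

/-!
A 0/1 vector `x : T → ℕ` with `x k = 1 ↔ o = some k` is the indicator of the option `o`, so each
filtered sum `∑ k, if P k then x k else 0` is `1` or `0` according as `o` holds a tile satisfying
`P` or not. Constraint (i) then holds automatically, and an edge constraint (ii)/(iii) for the
color `ℓ` fails exactly when the first cell holds a tile of color `ℓ` and the second one a tile
of another color; quantifying over `ℓ`, the constraints say that the two colors agree.
-/

section OptionIndicator

variable {T : Type*} {x : T → ℕ} {o : Option T}

theorem eq_zero_of_ne_some (hx : ∀ k, x k = 0 ∨ x k = 1) (ho : ∀ k, x k = 1 ↔ o = some k)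
    {k : T} (hk : o ≠ some k) : x k = 0 :=
  (hx k).resolve_right fun h1 => hk ((ho k).mp h1)

theorem sum_ite_eq_elim_of_binary [Fintype T] (hx : ∀ k, x k = 0 ∨ x k = 1)
    (ho : ∀ k, x k = 1 ↔ o = some k) (P : T → Prop) [DecidablePred P] :
    (∑ k, if P k then x k else 0) = o.elim 0 fun p => if P p then 1 else 0 := by
  cases o with
  | none =>
    refine Finset.sum_eq_zero fun k _ => ?_
    simp [eq_zero_of_ne_some hx ho (Option.some_ne_none k).symm]
  | some p =>
    rw [Finset.sum_eq_single p, (ho p).mpr rfl]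
    · rfl
    · intro k _ hk
      simp [eq_zero_of_ne_some hx ho (by simpa [eq_comm] using hk)]
    · simp

theorem sum_eq_elim_of_binary [Fintype T] (hx : ∀ k, x k = 0 ∨ x k = 1)
    (ho : ∀ k, x k = 1 ↔ o = some k) : (∑ k, x k) = if o.isSome then 1 else 0 := by
  cases o <;> simpa using sum_ite_eq_elim_of_binary hx ho fun _ => True

end OptionIndicator

theorem Option.elim_le_one {T : Type*} (o : Option T) (P : T → Prop) [DecidablePred P] :
    (o.elim 0 fun p => if P p then 1 else 0) ≤ 1 := by
  cases o
  · exact zero_le_one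
  · exact ite_le_one le_rfl zero_le_one

theorem edge_constraint_iff {C T : Type*} [DecidableEq C] (f g : T → C) (o₁ o₂ : Option T) :
    (∀ ℓ : C, (o₁.elim 0 fun p => if f p = ℓ then 1 else 0) +
        (o₂.elim 0 fun q => if g q ≠ ℓ then 1 else 0) ≤ 1) ↔
      ∀ p q, o₁ = some p → o₂ = some q → f p = g q := by
  cases o₁ with
  | none =>
    simpa using fun ℓ => Option.elim_le_one o₂ (g · ≠ ℓ)
  | some p =>
    cases o₂ with
    | none => simpa using fun ℓ => Option.elim_le_one (some p) (f · = ℓ)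
    | some q =>
      simp only [Option.elim, Option.some.injEq]
      constructor
      · rintro hpq _ _ rfl rfl
        by_contra hne
        simpa [Ne.symm hne] using hpq (f p)
      · intro hpq ℓ
        by_cases hℓ : f p = ℓ <;> simp [hℓ, ← hpq p q rfl rfl]

theorem stmt_1_general {C T : Type} [Fintype T] [DecidableEq C]
    {h w : ℕ} (tn tw ts te : T → C)
    (x : Fin h → Fin w → T → ℕ)
    (hx : ∀ i j k, x i j k = 0 ∨ x i j k = 1)
    (τ : Fin h → Fin w → Option T)
    (hτ : ∀ i j k, x i j k = 1 ↔ τ i j = some k) :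
    (((∀ i j, (∑ k : T, x i j k) ≤ 1) ∧
      (∀ (i : Fin h) (j : Fin w) (hj : j.val + 1 < w) (ℓ : C),
        (∑ k : T, if te k = ℓ then x i j k else 0) +
          (∑ k : T, if tw k ≠ ℓ then x i ⟨j.val + 1, hj⟩ k else 0) ≤ 1) ∧
      (∀ (i : Fin h) (j : Fin w) (hi : i.val + 1 < h) (ℓ : C),
        (∑ k : T, if ts k = ℓ then x i j k else 0) +
          (∑ k : T, if tn k ≠ ℓ then x ⟨i.val + 1, hi⟩ j k else 0) ≤ 1))
      ↔ ValidPartial tn tw ts te τ) ∧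
    (∑ i : Fin h, ∑ j : Fin w, ∑ k : T, x i j k) = coverSize τ := by
  have hsum i j := sum_ite_eq_elim_of_binary (hx i j) (hτ i j)
  have htot i j := sum_eq_elim_of_binary (hx i j) (hτ i j)
  have hcell i j : (if (τ i j).isSome then 1 else 0) ≤ 1 := ite_le_one le_rfl zero_le_one
  refine ⟨?_, ?_⟩
  · simp only [hsum, htot, edge_constraint_iff, ValidPartial]
    rw [and_iff_right hcell, and_comm]
  · simp only [htot, coverSize, Finset.card_filter, Fintype.sum_prod_type]

/-- the maximum-cover constraints (16) hold for a binary assignment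
iff the induced partial tiling is valid; moreover the objective equals the cover size. -/
theorem stmt_1 {C T : Type} [Fintype T] [DecidableEq C]
    {h w : ℕ} (tn tw ts te : T → C)
    (x : Fin h → Fin w → T → ℕ)
    (hx : ∀ i j k, x i j k = 0 ∨ x i j k = 1)
    (τ : Fin h → Fin w → Option T)
    (hτ : ∀ i j k, x i j k = 1 ↔ τ i j = some k)
    (hτ0 : ∀ i j, (∑ k : T, x i j k) = 0 ↔ τ i j = none) :
    (((∀ i j, (∑ k : T, x i j k) ≤ 1) ∧
      (∀ (i : Fin h) (j : Fin w) (hj : j.val + 1 < w) (ℓ : C),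
        (∑ k : T, if te k = ℓ then x i j k else 0) +
          (∑ k : T, if tw k ≠ ℓ then x i ⟨j.val + 1, hj⟩ k else 0) ≤ 1) ∧
      (∀ (i : Fin h) (j : Fin w) (hi : i.val + 1 < h) (ℓ : C),
        (∑ k : T, if ts k = ℓ then x i j k else 0) +
          (∑ k : T, if tn k ≠ ℓ then x ⟨i.val + 1, hi⟩ j k else 0) ≤ 1))
      ↔ ValidPartial tn tw ts te τ) ∧
    (∑ i : Fin h, ∑ j : Fin w, ∑ k : T, x i j k) = coverSize τ :=
  stmt_1_general tn tw ts te x hx τ hτ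
end

section
/- If a binary assignment x : Fin h × Fin w × T → {0,1} is feasible for the maximum-cover constraints (at most one tile per cell, and for each color ℓ the horizontal constraints ∑_{k, e(k)=ℓ} x(i,j,k) + ∑_{k, w(k)≠ℓ} x(i,j+1,k) ≤ 1 and vertical constraints ∑_{k, s(k)=ℓ} x(i,j,k) + ∑_{k, n(k)≠ℓ} x(i+1,j,k) ≤ 1) and its objective value ∑_{i,j,k} x(i,j,k) equals h·w, then every cell holds exactly one tile and the induced complete tiling τ : Fin h × Fin w → T is a valid tiling. -/
/-!
Since every cell carries at most one tile, the objective value h·w forces exactly one tile per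
cell. For adjacent cells, taking ℓ to be the shared-edge color of the first tile makes the
first sum of the edge constraint equal to 1, so the second sum must vanish: the tile of the
neighbour has color ℓ on that edge.
-/

open Finset

theorem eq_of_forall_le_of_sum_eq_card_nsmul {α M : Type*} [Fintype α] [AddCommMonoid M]
    [PartialOrder M] [IsOrderedCancelAddMonoid M] {f : α → M} {c : M}
    (hf : ∀ a, f a ≤ c) (hsum : ∑ a, f a = Fintype.card α • c) (a : α) : f a = c :=
  (sum_eq_sum_iff_of_le fun a _ => hf a).mp (by simpa using hsum) a (mem_univ a)

theorem Fintype.exists_eq_pi_single_of_sum_eq_one {α : Type*} [Fintype α] [DecidableEq α]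
    {x : α → ℕ} (hx : ∑ a, x a = 1) : ∃ a, x = Pi.single a 1 := by
  obtain ⟨a, ha⟩ := (Finsupp.sum_eq_one_iff (Finsupp.equivFunOnFinite.symm x)).mp
    (by rwa [Finsupp.sum_fintype _ _ fun _ => rfl])
  exact ⟨a, by simpa using congrArg Finsupp.equivFunOnFinite ha⟩

section EdgeConstraint

variable {α C : Type*} [Fintype α] [DecidableEq α]

theorem sum_ite_pi_single (p : α → Prop) [DecidablePred p] (a : α) :
    (∑ k, if p k then (Pi.single a 1 : α → ℕ) k else 0) = if p a then 1 else 0 := by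
  rw [Fintype.sum_eq_single a fun k hk => by simp [hk]]
  simp

theorem eq_of_forall_sum_ite_add_sum_ite_le_one [DecidableEq C] {f g : α → C} {a b : α}
    (hle : ∀ ℓ, (∑ k, if f k = ℓ then (Pi.single a 1 : α → ℕ) k else 0) +
      (∑ k, if g k ≠ ℓ then (Pi.single b 1 : α → ℕ) k else 0) ≤ 1) :
    f a = g b := by
  have hfa := hle (f a)
  rw [sum_ite_pi_single, sum_ite_pi_single, if_pos rfl] at hfa
  by_contra hne
  rw [if_pos (Ne.symm hne)] at hfa
  omega

end EdgeConstraint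

theorem stmt_2_general {C T : Type} [Fintype T] [DecidableEq C]
    {h w : ℕ} (tn tw ts te : T → C)
    (x : Fin h → Fin w → T → ℕ)
    (h1 : ∀ i j, (∑ k : T, x i j k) ≤ 1)
    (h2 : ∀ (i : Fin h) (j : Fin w) (hj : j.val + 1 < w) (ℓ : C),
      (∑ k : T, if te k = ℓ then x i j k else 0) +
        (∑ k : T, if tw k ≠ ℓ then x i ⟨j.val + 1, hj⟩ k else 0) ≤ 1)
    (h3 : ∀ (i : Fin h) (j : Fin w) (hi : i.val + 1 < h) (ℓ : C),
      (∑ k : T, if ts k = ℓ then x i j k else 0) +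
        (∑ k : T, if tn k ≠ ℓ then x ⟨i.val + 1, hi⟩ j k else 0) ≤ 1)
    (hobj : (∑ i : Fin h, ∑ j : Fin w, ∑ k : T, x i j k) = h * w) :
    (∀ i j, (∑ k : T, x i j k) = 1) ∧
    ∃ τ : Fin h → Fin w → T,
      (∀ i j k, x i j k = 1 ↔ τ i j = k) ∧
      (∀ (i : Fin h) (j : Fin w) (hi : i.val + 1 < h),
        ts (τ i j) = tn (τ ⟨i.val + 1, hi⟩ j)) ∧
      (∀ (i : Fin h) (j : Fin w) (hj : j.val + 1 < w),
        te (τ i j) = tw (τ i ⟨j.val + 1, hj⟩)) := by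
  classical
  have hcell : ∀ i j, ∑ k, x i j k = 1 := fun i j =>
    eq_of_forall_le_of_sum_eq_card_nsmul (f := fun p : Fin h × Fin w => ∑ k, x p.1 p.2 k)
      (fun p => h1 p.1 p.2) (by simp [Fintype.sum_prod_type, hobj]) (i, j)
  choose τ hτ using fun i j => Fintype.exists_eq_pi_single_of_sum_eq_one (hcell i j)
  refine ⟨hcell, τ, fun i j k => ?_, fun i j hi => ?_, fun i j hj => ?_⟩
  · simp [hτ, Pi.single_apply, eq_comm]
  · exact eq_of_forall_sum_ite_add_sum_ite_le_one (by simpa only [hτ] using h3 i j hi)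
  · exact eq_of_forall_sum_ite_add_sum_ite_le_one (by simpa only [hτ] using h2 i j hj)

/-- a feasible solution of the maximum-cover program (16) whose objective
value equals h·w has exactly one tile at every cell and induces a valid complete tiling. -/
theorem stmt_2 {C T : Type} [Fintype T] [DecidableEq C]
    {h w : ℕ} (tn tw ts te : T → C)
    (x : Fin h → Fin w → T → ℕ)
    (hx : ∀ i j k, x i j k = 0 ∨ x i j k = 1)
    (h1 : ∀ i j, (∑ k : T, x i j k) ≤ 1)
    (h2 : ∀ (i : Fin h) (j : Fin w) (hj : j.val + 1 < w) (ℓ : C),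
      (∑ k : T, if te k = ℓ then x i j k else 0) +
        (∑ k : T, if tw k ≠ ℓ then x i ⟨j.val + 1, hj⟩ k else 0) ≤ 1)
    (h3 : ∀ (i : Fin h) (j : Fin w) (hi : i.val + 1 < h) (ℓ : C),
      (∑ k : T, if ts k = ℓ then x i j k else 0) +
        (∑ k : T, if tn k ≠ ℓ then x ⟨i.val + 1, hi⟩ j k else 0) ≤ 1)
    (hobj : (∑ i : Fin h, ∑ j : Fin w, ∑ k : T, x i j k) = h * w) :
    (∀ i j, (∑ k : T, x i j k) = 1) ∧
    ∃ τ : Fin h → Fin w → T,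
      (∀ i j k, x i j k = 1 ↔ τ i j = k) ∧
      (∀ (i : Fin h) (j : Fin w) (hi : i.val + 1 < h),
        ts (τ i j) = tn (τ ⟨i.val + 1, hi⟩ j)) ∧
      (∀ (i : Fin h) (j : Fin w) (hj : j.val + 1 < w),
        te (τ i j) = tw (τ i ⟨j.val + 1, hj⟩)) :=
  stmt_2_general tn tw ts te x h1 h2 h3 hobj
end

section
/- Let x : Fin h × Fin w × T → {0,1} satisfy the maximum-rectangular-tiling constraints: (i) for every color ℓ and vertically consecutive cells, ∑_{k, s(k)=ℓ} x(i,j,k) − ∑_{k, n(k)=ℓ} x(i+1,j,k) ≥ 0; (ii) for every color ℓ and horizontally consecutive cells, ∑_{k, e(k)=ℓ} x(i,j,k) − ∑_{k, w(k)=ℓ} x(i,j+1,k) ≥ 0; (iii) for every 2×2 block of cells, ∑_k x(i+1,j,k) + ∑_k x(i,j+1,k) − ∑_k x(i+1,j+1,k) ≤ 1; (iv) ∑_k x(1,1,k) = 1 at the top-left cell; and (v) ∑_k x(i,j,k) ≤ 1 at every other cell. Then the set S of occupied cells (those with ∑_k x(i,j,k) = 1) equals {1,…,a} × {1,…,b}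 for some 1 ≤ a ≤ h and 1 ≤ b ≤ w, and the induced tiling on S (assigning to each occupied cell its unique tile) is a valid tiling of this a×b rectangle. -/
/-!
The colour-flow constraints say that an occupied cell forces its upper (resp. left)
neighbour to be occupied by a tile whose south (resp. east) colour matches; as every cell holds at
most one tile, this is the tile of that neighbour. Hence the occupied cells form a lower set
containing the corner, and the 2×2 constraint makes it closed under completing a square, which
forces it to be a rectangle.
-/

open Finset

section ZeroOneVector

variable {T : Type} [Fintype T] {v : T → ℕ}

theorem sum_eq_one_iff_exists_eq_one (hv : ∀ k, v k = 0 ∨ v k = 1) (hsum : ∑ k, v k ≤ 1) :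
    ∑ k, v k = 1 ↔ ∃ p, v p = 1 := by
  constructor
  · intro hs
    obtain ⟨p, -, hp⟩ := exists_ne_zero_of_sum_ne_zero (hs.trans_ne one_ne_zero)
    exact ⟨p, (hv p).resolve_left hp⟩
  · rintro ⟨p, hp⟩
    exact hsum.antisymm (hp ▸ single_le_sum (fun _ _ => Nat.zero_le _) (mem_univ p))

theorem eq_of_eq_one_of_sum_le_one (hsum : ∑ k, v k ≤ 1) {p q : T} (hp : v p = 1)
    (hq : v q = 1) : p = q := by
  classical
  by_contra hne
  have : v p + v q ≤ ∑ k, v k := by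
    rw [← sum_pair hne]
    exact sum_le_sum_of_subset (subset_univ _)
  omega

theorem exists_eq_one_color_eq_of_color_sum_le {C : Type} [DecidableEq C] {u : T → ℕ}
    (c c' : T → C) (hv : ∀ k, v k = 0 ∨ v k = 1)
    (hle : ∀ ℓ, (∑ k, if c' k = ℓ then u k else 0) ≤ ∑ k, if c k = ℓ then v k else 0)
    {q : T} (hq : u q ≠ 0) : ∃ p, v p = 1 ∧ c p = c' q := by
  have hpos : u q ≤ ∑ k ∈ univ.filter (c' · = c' q), u k :=
    single_le_sum (fun _ _ => Nat.zero_le _) (by simp)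
  have hle' := hle (c' q)
  rw [← sum_filter, ← sum_filter] at hle'
  obtain ⟨p, hpc, hp⟩ := exists_ne_zero_of_sum_ne_zero (by omega :
    ∑ k ∈ univ.filter (c · = c' q), v k ≠ 0)
  exact ⟨p, (hv p).resolve_left hp, (mem_filter.1 hpc).2⟩

theorem sum_eq_one_of_color_sum_le {C : Type} [DecidableEq C] {u : T → ℕ}
    (c c' : T → C) (hu : ∀ k, u k = 0 ∨ u k = 1) (hv : ∀ k, v k = 0 ∨ v k = 1)
    (hsum : ∑ k, v k ≤ 1)
    (hle : ∀ ℓ, (∑ k, if c' k = ℓ then u k else 0) ≤ ∑ k, if c k = ℓ then v k else 0)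
    (hu₁ : ∑ k, u k = 1) : ∑ k, v k = 1 := by
  obtain ⟨q, hq⟩ := (sum_eq_one_iff_exists_eq_one hu hu₁.le).1 hu₁
  obtain ⟨p, hp, -⟩ := exists_eq_one_color_eq_of_color_sum_le c c' hv hle (hq ▸ one_ne_zero)
  exact (sum_eq_one_iff_exists_eq_one hv hsum).2 ⟨p, hp⟩

end ZeroOneVector

section Rectangle

variable {P : ℕ → ℕ → Prop}

theorem of_le_of_pred_closed (hup : ∀ i j, P (i + 1) j → P i j)
    (hleft : ∀ i j, P i (j + 1) → P i j) {i i' j j' : ℕ} (hi : i' ≤ i) (hj : j' ≤ j)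
    (hP : P i j) : P i' j' :=
  antitone_nat_of_succ_le (f := (P · j')) (fun n => hup n j') hi
    (antitone_nat_of_succ_le (f := P i) (fun n => hleft i n) hj hP)

theorem exists_rectangle_of_corner_closed {h w : ℕ}
    (hbound : ∀ i j, P i j → i < h ∧ j < w) (h00 : P 0 0)
    (hup : ∀ i j, P (i + 1) j → P i j) (hleft : ∀ i j, P i (j + 1) → P i j)
    (hcorner : ∀ i j, P (i + 1) j → P i (j + 1) → P (i + 1) (j + 1)) :
    ∃ a b, 1 ≤ a ∧ a ≤ h ∧ 1 ≤ b ∧ b ≤ w ∧ ∀ i j, P i j ↔ i < a ∧ j < b := by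
  classical
  have hrows : ∃ n, ¬ P n 0 := ⟨h, fun hP => (hbound _ _ hP).1.false⟩
  have hcols : ∃ n, ¬ P 0 n := ⟨w, fun hP => (hbound _ _ hP).2.false⟩
  have hrect i j : P i j ↔ i < Nat.find hrows ∧ j < Nat.find hcols := by
    constructor
    · intro hP
      constructor
      · by_contra! hi
        exact Nat.find_spec hrows (of_le_of_pred_closed hup hleft hi (Nat.zero_le j) hP)
      · by_contra! hj
        exact Nat.find_spec hcols (of_le_of_pred_closed hup hleft (Nat.zero_le i) hj hP)
    · induction i generalizing j with
      | zero => exact fun ⟨_, hj⟩ => not_not.1 (Nat.find_min hcols hj)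
      | succ i ihi =>
        induction j with
        | zero => exact fun ⟨hi, _⟩ => not_not.1 (Nat.find_min hrows hi)
        | succ j ihj =>
          exact fun ⟨hi, hj⟩ => hcorner i j (ihj ⟨hi, by omega⟩) (ihi (j + 1) ⟨by omega, hj⟩)
  exact ⟨_, _, ((hrect 0 0).1 h00).1, Nat.find_min' hrows fun hP => (hbound _ _ hP).1.false,
    ((hrect 0 0).1 h00).2, Nat.find_min' hcols fun hP => (hbound _ _ hP).2.false, hrect⟩

end Rectangle

/-- Indexed by `ℕ` so that the occupied cells form a subset of `ℕ × ℕ`; cells outside the grid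
are unoccupied. -/
def Occupied {T : Type} [Fintype T] {h w : ℕ} (x : Fin h → Fin w → T → ℕ) (i j : ℕ) : Prop :=
  ∃ (hi : i < h) (hj : j < w), ∑ k, x ⟨i, hi⟩ ⟨j, hj⟩ k = 1

/-- feasible solutions of the maximum rectangular valid tiling program (13)
occupy exactly an a×b rectangle anchored at the top-left corner, and the induced tiling
of that rectangle is valid. -/
theorem stmt_3 {C T : Type} [Fintype T] [DecidableEq C]
    {h w : ℕ} (hh : 0 < h) (hw : 0 < w)
    (tn tw ts te : T → C)
    (x : Fin h → Fin w → T → ℕ)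
    (hx : ∀ i j k, x i j k = 0 ∨ x i j k = 1)
    (h1 : ∀ (i : Fin h) (j : Fin w) (hi : i.val + 1 < h) (ℓ : C),
      (∑ k : T, if tn k = ℓ then x ⟨i.val + 1, hi⟩ j k else 0) ≤
        ∑ k : T, if ts k = ℓ then x i j k else 0)
    (h2 : ∀ (i : Fin h) (j : Fin w) (hj : j.val + 1 < w) (ℓ : C),
      (∑ k : T, if tw k = ℓ then x i ⟨j.val + 1, hj⟩ k else 0) ≤
        ∑ k : T, if te k = ℓ then x i j k else 0)
    (h3 : ∀ (i : Fin h) (j : Fin w) (hi : i.val + 1 < h) (hj : j.val + 1 < w),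
      (∑ k : T, x ⟨i.val + 1, hi⟩ j k) + (∑ k : T, x i ⟨j.val + 1, hj⟩ k) ≤
        1 + ∑ k : T, x ⟨i.val + 1, hi⟩ ⟨j.val + 1, hj⟩ k)
    (h4 : (∑ k : T, x ⟨0, hh⟩ ⟨0, hw⟩ k) = 1)
    (h5 : ∀ i j, (∑ k : T, x i j k) ≤ 1) :
    ∃ a b : ℕ, 1 ≤ a ∧ a ≤ h ∧ 1 ≤ b ∧ b ≤ w ∧
      (∀ (i : Fin h) (j : Fin w),
        (∑ k : T, x i j k) = 1 ↔ (i.val < a ∧ j.val < b)) ∧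
      (∀ (i : Fin h) (j : Fin w) (hi : i.val + 1 < h) (p q : T),
        x i j p = 1 → x ⟨i.val + 1, hi⟩ j q = 1 → ts p = tn q) ∧
      (∀ (i : Fin h) (j : Fin w) (hj : j.val + 1 < w) (p q : T),
        x i j p = 1 → x i ⟨j.val + 1, hj⟩ q = 1 → te p = tw q) := by
  have hup i j : Occupied x (i + 1) j → Occupied x i j := fun ⟨hi, hj, hs⟩ =>
    ⟨by omega, hj, sum_eq_one_of_color_sum_le ts tn (hx _ _) (hx _ _) (h5 _ _)
      (h1 ⟨i, by omega⟩ ⟨j, hj⟩ hi) hs⟩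
  have hleft i j : Occupied x i (j + 1) → Occupied x i j := fun ⟨hi, hj, hs⟩ =>
    ⟨hi, by omega, sum_eq_one_of_color_sum_le te tw (hx _ _) (hx _ _) (h5 _ _)
      (h2 ⟨i, hi⟩ ⟨j, by omega⟩ hj) hs⟩
  have hcorner i j : Occupied x (i + 1) j → Occupied x i (j + 1) →
      Occupied x (i + 1) (j + 1) := by
    rintro ⟨hi, hj', hs₁⟩ ⟨hi', hj, hs₂⟩
    have hsquare := h3 ⟨i, hi'⟩ ⟨j, hj'⟩ hi hj
    have := h5 ⟨i + 1, hi⟩ ⟨j + 1, hj⟩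
    exact ⟨hi, hj, by simp only at hsquare; omega⟩
  obtain ⟨a, b, ha, hah, hb, hbw, hrect⟩ := exists_rectangle_of_corner_closed
    (fun _ _ ⟨hi, hj, _⟩ => ⟨hi, hj⟩) ⟨hh, hw, h4⟩ hup hleft hcorner
  refine ⟨a, b, ha, hah, hb, hbw,
    fun i j => Iff.trans ⟨fun hs => ⟨i.2, j.2, hs⟩, fun ⟨_, _, hs⟩ => hs⟩ (hrect i j), ?_, ?_⟩
  · intro i j hi p q hp hq
    obtain ⟨p', hp', hc⟩ :=
      exists_eq_one_color_eq_of_color_sum_le ts tn (hx i j) (h1 i j hi) (hq ▸ one_ne_zero)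
    rwa [eq_of_eq_one_of_sum_le_one (h5 i j) hp hp']
  · intro i j hj p q hp hq
    obtain ⟨p', hp', hc⟩ :=
      exists_eq_one_color_eq_of_color_sum_le te tw (hx i j) (h2 i j hj) (hq ▸ one_ne_zero)
    rwa [eq_of_eq_one_of_sum_le_one (h5 i j) hp hp']
end

section
/- Let S be a subset of {1,…,h} × {1,…,w} such that (1,1) ∈ S, S is closed under moving up and left (i.e., (i+1,j) ∈ S implies (i,j) ∈ S, and (i,j+1) ∈ S implies (i,j) ∈ S), and S satisfies the corner condition: if (i+1,j) ∈ S and (i,j+1) ∈ S then (i+1,j+1) ∈ S. Then S = {1,…,a} × {1,…,b} for some 1 ≤ a ≤ h and 1 ≤ b ≤ w. -/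
/-!
Transport the set to a predicate `P i j` on `ℕ × ℕ`. Closure under moving up and left makes `P`
antitone in each coordinate, so `P i j` implies `P i 0 ∧ P 0 j`; conversely the corner condition
fills in `P (i+1) (j+1)` from `P (i+1) j` and `P i (j+1)`, so a double induction gives
`P i j ↔ P i 0 ∧ P 0 j`. The first column and the first row are initial segments of `ℕ`, cut
off at some `a ≤ h` and `b ≤ w`, and they are nonempty because `P 0 0` holds.
-/

theorem Nat.exists_le_forall_iff_lt_of_antitone {p : ℕ → Prop} (hp : Antitone p) {n : ℕ}
    (hn : ¬ p n) : ∃ a ≤ n, ∀ i, p i ↔ i < a := by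
  classical
  have hex : ∃ n, ¬ p n := ⟨n, hn⟩
  refine ⟨Nat.find hex, Nat.find_min' hex hn, fun i => ⟨fun hi => ?_, fun hi => ?_⟩⟩
  · by_contra! ha
    exact Nat.find_spec hex (hp ha hi)
  · exact not_not.mp (Nat.find_min hex hi)

namespace UpLeftClosed

variable {P : ℕ → ℕ → Prop}
  (hup : ∀ i j, P (i + 1) j → P i j) (hleft : ∀ i j, P i (j + 1) → P i j)

include hup in
theorem antitone_fst (j : ℕ) : Antitone (P · j) :=
  antitone_nat_of_succ_le fun i => hup i j

include hleft in
theorem antitone_snd (i : ℕ) : Antitone (P i ·) :=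
  antitone_nat_of_succ_le fun j => hleft i j

include hup hleft in
theorem of_fst_zero_of_zero_snd
    (hcorner : ∀ i j, P (i + 1) j → P i (j + 1) → P (i + 1) (j + 1)) {i j : ℕ}
    (hi : P i 0) (hj : P 0 j) : P i j := by
  induction i generalizing j with
  | zero => exact hj
  | succ i ihi =>
    induction j with
    | zero => exact hi
    | succ j ihj => exact hcorner i j (ihj (hleft 0 j hj)) (ihi (hup i 0 hi) hj)

include hup hleft in
theorem iff_fst_zero_and_zero_snd
    (hcorner : ∀ i j, P (i + 1) j → P i (j + 1) → P (i + 1) (j + 1)) (i j : ℕ) :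
    P i j ↔ P i 0 ∧ P 0 j :=
  ⟨fun hij => ⟨antitone_snd hleft i (Nat.zero_le j) hij,
    antitone_fst hup j (Nat.zero_le i) hij⟩,
   fun ⟨hi, hj⟩ => of_fst_zero_of_zero_snd hup hleft hcorner hi hj⟩

end UpLeftClosed

/-- a subset of the grid containing the top-left cell, closed under
moving up and left, and satisfying the corner condition is a full axis-aligned
rectangle anchored at the top-left corner. -/
theorem stmt_4 {h w : ℕ} (hh : 0 < h) (hw : 0 < w)
    (S : Set (Fin h × Fin w))
    (h0 : (⟨⟨0, hh⟩, ⟨0, hw⟩⟩ : Fin h × Fin w) ∈ S)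
    (hup : ∀ (i : Fin h) (j : Fin w) (hi : i.val + 1 < h),
      (⟨⟨i.val + 1, hi⟩, j⟩ : Fin h × Fin w) ∈ S → (⟨i, j⟩ : Fin h × Fin w) ∈ S)
    (hleft : ∀ (i : Fin h) (j : Fin w) (hj : j.val + 1 < w),
      (⟨i, ⟨j.val + 1, hj⟩⟩ : Fin h × Fin w) ∈ S → (⟨i, j⟩ : Fin h × Fin w) ∈ S)
    (hcorner : ∀ (i : Fin h) (j : Fin w) (hi : i.val + 1 < h) (hj : j.val + 1 < w),
      (⟨⟨i.val + 1, hi⟩, j⟩ : Fin h × Fin w) ∈ S →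
      (⟨i, ⟨j.val + 1, hj⟩⟩ : Fin h × Fin w) ∈ S →
      (⟨⟨i.val + 1, hi⟩, ⟨j.val + 1, hj⟩⟩ : Fin h × Fin w) ∈ S) :
    ∃ a b : ℕ, 1 ≤ a ∧ a ≤ h ∧ 1 ≤ b ∧ b ≤ w ∧
      ∀ p : Fin h × Fin w, p ∈ S ↔ (p.1.val < a ∧ p.2.val < b) := by
  set P : ℕ → ℕ → Prop := fun i j =>
    ∃ (hi : i < h) (hj : j < w), (⟨⟨i, hi⟩, ⟨j, hj⟩⟩ : Fin h × Fin w) ∈ S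
  have hP_up : ∀ i j, P (i + 1) j → P i j := fun i j ⟨hi, hj, hs⟩ =>
    ⟨by omega, hj, hup ⟨i, by omega⟩ ⟨j, hj⟩ hi hs⟩
  have hP_left : ∀ i j, P i (j + 1) → P i j := fun i j ⟨hi, hj, hs⟩ =>
    ⟨hi, by omega, hleft ⟨i, hi⟩ ⟨j, by omega⟩ hj hs⟩
  have hP_corner : ∀ i j, P (i + 1) j → P i (j + 1) → P (i + 1) (j + 1) :=
    fun i j ⟨hi, hj, hs⟩ ⟨hi', hj', hs'⟩ => ⟨hi, hj', hcorner ⟨i, hi'⟩ ⟨j, hj⟩ hi hj' hs hs'⟩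
  obtain ⟨a, hah, ha⟩ := Nat.exists_le_forall_iff_lt_of_antitone
    (UpLeftClosed.antitone_fst hP_up 0) (n := h) fun ⟨hi, _⟩ => hi.false
  obtain ⟨b, hbw, hb⟩ := Nat.exists_le_forall_iff_lt_of_antitone
    (UpLeftClosed.antitone_snd hP_left 0) (n := w) fun ⟨_, hj, _⟩ => hj.false
  have hP00 : P 0 0 := ⟨hh, hw, h0⟩
  refine ⟨a, b, (ha 0).1 hP00, hah, (hb 0).1 hP00, hbw, fun ⟨⟨i, hi⟩, ⟨j, hj⟩⟩ => ?_⟩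
  rw [← ha, ← hb, ← UpLeftClosed.iff_fst_zero_and_zero_snd hP_up hP_left hP_corner]
  exact ⟨fun hs => ⟨hi, hj, hs⟩, fun ⟨_, _, hs⟩ => hs⟩
end

section
/- For a tile set T and the h×w grid, the optimal value of the maximum adjacency constraint satisfaction program (19) — maximize ∑_{i,j} (1 − h^v_{i,j}) + ∑_{i,j} (1 − h^h_{i,j}) over complete tile assignments x (exactly one tile per cell) and nonnegative reals h^h, h^v subject to |∑_{k, s(k)=ℓ} x(i,j,k) − ∑_{k, n(k)=ℓ} x(i+1,j,k)| ≤ h^h_{i,j} for all colors ℓ and vertically consecutive cells, and |∑_{k, e(k)=ℓ} x(i,j,k) − ∑_{k, w(k)=ℓ} x(i,j+1,k)| ≤ h^v_{i,j} for all colors ℓ and horizontally consecutive cells — equals the maximum, over all complete tilings τ : Fin h × Fin w → T, of the number of adjacent cell pairs whose shared edge colors match (i.e., pairs with s(τ(i,j)) = n(τ(i+1,j)) or e(τ(i,j)) = w(τ(i,j+1))). In particular, for a fixed complete tiling the smallest feasible h^h_{i,j} is 0 if the corresponding vertical adjacency matches and 1 otherwise, and similarly for h^v_{i,j}. -/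
open scoped Classical

/-- Number of adjacent cell pairs of a complete tiling whose shared edge colors match. -/
noncomputable def matchCount {C T : Type} {h w : ℕ}
    (tn tw ts te : T → C) (τ : Fin h → Fin w → T) : ℕ :=
  (Finset.univ.filter fun p : Fin h × Fin w =>
      ∃ hi : p.1.val + 1 < h, ts (τ p.1 p.2) = tn (τ ⟨p.1.val + 1, hi⟩ p.2)).card +
  (Finset.univ.filter fun p : Fin h × Fin w =>
      ∃ hj : p.2.val + 1 < w, te (τ p.1 p.2) = tw (τ p.1 ⟨p.2.val + 1, hj⟩)).card

/-- Feasibility for the maximum adjacency constraint satisfaction program (19). -/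
def cspFeasible {C T : Type} [Fintype T] {h w : ℕ}
    (tn tw ts te : T → C)
    (x : Fin h → Fin w → T → ℕ) (hH hV : Fin h → Fin w → ℝ) : Prop :=
  (∀ i j k, x i j k = 0 ∨ x i j k = 1) ∧
  (∀ i j, (∑ k : T, x i j k) = 1) ∧
  (∀ i j, 0 ≤ hH i j) ∧ (∀ i j, 0 ≤ hV i j) ∧
  (∀ (i : Fin h) (j : Fin w) (hi : i.val + 1 < h) (ℓ : C),
    |(∑ k : T, if ts k = ℓ then (x i j k : ℝ) else 0) -
      ∑ k : T, if tn k = ℓ then (x ⟨i.val + 1, hi⟩ j k : ℝ) else 0| ≤ hH i j) ∧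
  (∀ (i : Fin h) (j : Fin w) (hj : j.val + 1 < w) (ℓ : C),
    |(∑ k : T, if te k = ℓ then (x i j k : ℝ) else 0) -
      ∑ k : T, if tw k = ℓ then (x i ⟨j.val + 1, hj⟩ k : ℝ) else 0| ≤ hV i j)

/-- Objective of program (19): sum of (1 − h) over all horizontal and vertical edges. -/
noncomputable def cspObjective {h w : ℕ} (hH hV : Fin h → Fin w → ℝ) : ℝ :=
  (∑ p ∈ Finset.univ.filter (fun p : Fin h × Fin w => p.2.val + 1 < w),
      (1 - hV p.1 p.2)) +
  (∑ p ∈ Finset.univ.filter (fun p : Fin h × Fin w => p.1.val + 1 < h),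
      (1 - hH p.1 p.2))

lemma onehot_sum {C T : Type} [Fintype T] [DecidableEq C] (f : T → C) (ℓ : C) (a : T) :
    (∑ k : T, if f k = ℓ then (if a = k then (1:ℝ) else 0) else 0)
      = if f a = ℓ then 1 else 0 := by
  have key : ∀ k : T, (if f k = ℓ then (if a = k then (1:ℝ) else 0) else 0)
      = if a = k then (if f a = ℓ then 1 else 0) else 0 := by
    intro k; by_cases hk : a = k
    · subst hk; simp
    · simp [hk]
  rw [Finset.sum_congr rfl fun k _ => key k, Finset.sum_ite_eq, if_pos (Finset.mem_univ a)]

lemma edgeLeast {C T : Type} [Fintype T] [DecidableEq C] (f g : T → C) (a b : T) :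
    IsLeast { t : ℝ | 0 ≤ t ∧ ∀ ℓ : C,
        |(∑ k : T, if f k = ℓ then (if a = k then (1:ℝ) else 0) else 0) -
          ∑ k : T, if g k = ℓ then (if b = k then (1:ℝ) else 0) else 0| ≤ t }
      (if f a = g b then 0 else 1) := by
  constructor
  · refine ⟨by positivity, fun ℓ => ?_⟩
    rw [onehot_sum, onehot_sum]
    by_cases hm : f a = g b
    · simp [hm]
    · rw [if_neg hm]
      by_cases h1 : f a = ℓ <;> by_cases h2 : g b = ℓ <;> simp [h1, h2]
  · rintro t ⟨ht0, ht⟩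
    by_cases hm : f a = g b
    · simpa [hm] using ht0
    · rw [if_neg hm]
      have := ht (f a)
      rw [onehot_sum, onehot_sum, if_pos rfl,
        if_neg (fun hh : g b = f a => hm hh.symm)] at this
      simpa using this

lemma exists_onehot {T : Type} [Fintype T] (f : T → ℕ)
    (h01 : ∀ k, f k = 0 ∨ f k = 1) (hsum : ∑ k : T, f k = 1) :
    ∃ a : T, ∀ k, f k = if a = k then 1 else 0 := by
  obtain ⟨a, -, ha⟩ := Finset.exists_ne_zero_of_sum_ne_zero (s := Finset.univ) (f := f)
    (by rw [hsum]; norm_num)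
  have hfa : f a = 1 := (h01 a).resolve_left ha
  have hz : ∑ x ∈ Finset.univ.erase a, f x = 0 := by
    have := Finset.add_sum_erase Finset.univ f (Finset.mem_univ a)
    omega
  refine ⟨a, fun k => ?_⟩
  by_cases hk : a = k
  · subst hk; simp [hfa]
  · rw [if_neg hk]
    exact (Finset.sum_eq_zero_iff.1 hz) k
      (Finset.mem_erase.2 ⟨fun hh => hk hh.symm, Finset.mem_univ k⟩)

lemma sum_one_sub_eq {α : Type} [Fintype α] (R Q : α → Prop) (t s : Finset α)
    (ht : ∀ p, p ∈ t ↔ R p) (hs : ∀ p, p ∈ s ↔ Q p) (g : α → ℝ)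
    (hQR : ∀ p, Q p → R p) (hg : ∀ p, R p → g p = if Q p then 0 else 1) :
    ∑ p ∈ t, (1 - g p) = (s.card : ℝ) := by
  classical
  have h1 : ∑ p ∈ t, (1 - g p) = ∑ p ∈ t, (if Q p then (1:ℝ) else 0) := by
    refine Finset.sum_congr rfl fun p hp => ?_
    rw [hg p ((ht p).1 hp)]
    by_cases hq : Q p <;> simp [hq]
  have h2 : t.filter Q = s := by
    ext p
    rw [Finset.mem_filter, ht, hs]
    exact ⟨fun hp => hp.2, fun hp => ⟨hQR p hp, hp⟩⟩
  rw [h1, Finset.sum_boole, h2]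

lemma sum_one_sub_le {α : Type} [Fintype α] (R Q : α → Prop) (t s : Finset α)
    (ht : ∀ p, p ∈ t ↔ R p) (hs : ∀ p, p ∈ s ↔ Q p) (g : α → ℝ)
    (hQR : ∀ p, Q p → R p) (hg0 : ∀ p, 0 ≤ g p)
    (hg : ∀ p, R p → (if Q p then (0:ℝ) else 1) ≤ g p) :
    ∑ p ∈ t, (1 - g p) ≤ (s.card : ℝ) := by
  classical
  have h1 : ∑ p ∈ t, (1 - g p) ≤ ∑ p ∈ t, (if Q p then (1:ℝ) else 0) := by
    refine Finset.sum_le_sum fun p hp => ?_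
    have hr := (ht p).1 hp
    have := hg p hr
    by_cases hq : Q p
    · rw [if_pos hq]; have := hg0 p; linarith
    · rw [if_neg hq]; rw [if_neg hq] at this; linarith
  have h2 : t.filter Q = s := by
    ext p
    rw [Finset.mem_filter, ht, hs]
    exact ⟨fun hp => hp.2, fun hp => ⟨hQR p hp, hp⟩⟩
  rw [Finset.sum_boole, h2] at h1
  exact h1

/-- the optimal value of the max adjacency constraint satisfaction
program (19) equals the maximum number of matching adjacencies over all complete
tilings; in particular, for a fixed tiling the smallest feasible slack at an edge
is 0 if the edge matches and 1 otherwise. -/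
theorem stmt_5 {C T : Type} [Fintype T] [Nonempty T] [DecidableEq C] {h w : ℕ}
    (tn tw ts te : T → C) :
    IsGreatest
      { v : ℝ | ∃ (x : Fin h → Fin w → T → ℕ) (hH hV : Fin h → Fin w → ℝ),
          cspFeasible tn tw ts te x hH hV ∧ v = cspObjective hH hV }
      ((Finset.univ.sup' Finset.univ_nonempty
          fun τ : Fin h → Fin w → T => matchCount tn tw ts te τ : ℕ) : ℝ) ∧
    (∀ (τ : Fin h → Fin w → T) (i : Fin h) (j : Fin w) (hi : i.val + 1 < h),
      IsLeast { t : ℝ | 0 ≤ t ∧ ∀ ℓ : C,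
          |(∑ k : T, if ts k = ℓ then (if τ i j = k then (1 : ℝ) else 0) else 0) -
            ∑ k : T, if tn k = ℓ then
              (if τ ⟨i.val + 1, hi⟩ j = k then (1 : ℝ) else 0) else 0| ≤ t }
        (if ts (τ i j) = tn (τ ⟨i.val + 1, hi⟩ j) then 0 else 1)) ∧
    (∀ (τ : Fin h → Fin w → T) (i : Fin h) (j : Fin w) (hj : j.val + 1 < w),
      IsLeast { t : ℝ | 0 ≤ t ∧ ∀ ℓ : C,
          |(∑ k : T, if te k = ℓ then (if τ i j = k then (1 : ℝ) else 0) else 0) -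
            ∑ k : T, if tw k = ℓ then
              (if τ i ⟨j.val + 1, hj⟩ = k then (1 : ℝ) else 0) else 0| ≤ t }
        (if te (τ i j) = tw (τ i ⟨j.val + 1, hj⟩) then 0 else 1)) := by
  have hmc : ∀ τ : Fin h → Fin w → T, matchCount tn tw ts te τ =
      (Finset.univ.filter fun p : Fin h × Fin w =>
        ∃ hi : p.1.val + 1 < h, ts (τ p.1 p.2) = tn (τ ⟨p.1.val + 1, hi⟩ p.2)).card +
      (Finset.univ.filter fun p : Fin h × Fin w =>
        ∃ hj : p.2.val + 1 < w, te (τ p.1 p.2) = tw (τ p.1 ⟨p.2.val + 1, hj⟩)).card := by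
    intro τ
    rw [matchCount]
    congr!
  refine ⟨⟨?_, ?_⟩,
    fun τ i j hi => edgeLeast ts tn (τ i j) (τ ⟨i.val + 1, hi⟩ j),
    fun τ i j hj => edgeLeast te tw (τ i j) (τ i ⟨j.val + 1, hj⟩)⟩
  · -- membership
    obtain ⟨τ, -, hτ⟩ := Finset.exists_mem_eq_sup' (Finset.univ_nonempty)
      (fun τ : Fin h → Fin w → T => matchCount tn tw ts te τ)
    refine ⟨fun i j k => if τ i j = k then 1 else 0,
      fun i j => if hc : i.val + 1 < h then
        (if ts (τ i j) = tn (τ ⟨i.val + 1, hc⟩ j) then 0 else 1) else 0,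
      fun i j => if hc : j.val + 1 < w then
        (if te (τ i j) = tw (τ i ⟨j.val + 1, hc⟩) then 0 else 1) else 0,
      ⟨fun i j k => by by_cases hk : τ i j = k <;> simp [hk],
       fun i j => by simp [Finset.sum_ite_eq],
       fun i j => by dsimp only; split_ifs <;> norm_num,
       fun i j => by dsimp only; split_ifs <;> norm_num, ?_, ?_⟩, ?_⟩
    · intro i j hi ℓ
      dsimp only
      rw [dif_pos hi]
      have := (edgeLeast ts tn (τ i j) (τ ⟨i.val + 1, hi⟩ j)).1.2 ℓ
      simpa using this
    · intro i j hj ℓ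
      dsimp only
      rw [dif_pos hj]
      have := (edgeLeast te tw (τ i j) (τ i ⟨j.val + 1, hj⟩)).1.2 ℓ
      simpa using this
    · rw [hτ, hmc τ, Nat.cast_add, cspObjective]
      refine Eq.trans (add_comm _ _) (congrArg₂ (· + ·) ?_ ?_)
      · refine (sum_one_sub_eq (fun p : Fin h × Fin w => p.2.val + 1 < w)
          (fun p : Fin h × Fin w => ∃ hj : p.2.val + 1 < w,
            te (τ p.1 p.2) = tw (τ p.1 ⟨p.2.val + 1, hj⟩)) _ _
          (fun p => by simp) (fun p => by simp)
          (fun p => if hc : p.2.val + 1 < w then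
            (if te (τ p.1 p.2) = tw (τ p.1 ⟨p.2.val + 1, hc⟩) then 0 else 1) else 0)
          (fun p hq => hq.1) (fun p hr => ?_)).symm
        rw [dif_pos hr]
        by_cases hm : te (τ p.1 p.2) = tw (τ p.1 ⟨p.2.val + 1, hr⟩)
        · rw [if_pos hm, if_pos ⟨hr, hm⟩]
        · rw [if_neg hm, if_neg (fun ⟨_, hc⟩ => hm hc)]
      · refine (sum_one_sub_eq (fun p : Fin h × Fin w => p.1.val + 1 < h)
          (fun p : Fin h × Fin w => ∃ hi : p.1.val + 1 < h,
            ts (τ p.1 p.2) = tn (τ ⟨p.1.val + 1, hi⟩ p.2)) _ _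
          (fun p => by simp) (fun p => by simp)
          (fun p => if hc : p.1.val + 1 < h then
            (if ts (τ p.1 p.2) = tn (τ ⟨p.1.val + 1, hc⟩ p.2) then 0 else 1) else 0)
          (fun p hq => hq.1) (fun p hr => ?_)).symm
        rw [dif_pos hr]
        by_cases hm : ts (τ p.1 p.2) = tn (τ ⟨p.1.val + 1, hr⟩ p.2)
        · rw [if_pos hm, if_pos ⟨hr, hm⟩]
        · rw [if_neg hm, if_neg (fun ⟨_, hc⟩ => hm hc)]
  · -- upper bound
    rintro v ⟨x, hH, hV, ⟨h01, hsum, hH0, hV0, hVert, hHoriz⟩, rfl⟩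
    have hoh : ∀ i j, ∃ a : T, ∀ k, x i j k = if a = k then 1 else 0 :=
      fun i j => exists_onehot _ (h01 i j) (hsum i j)
    choose τ hτ using hoh
    have hcast : ∀ i j k, (x i j k : ℝ) = if τ i j = k then 1 else 0 := by
      intro i j k; rw [hτ]; split_ifs <;> norm_num
    have hVb : ∀ (i : Fin h) (j : Fin w) (hj : j.val + 1 < w),
        (if te (τ i j) = tw (τ i ⟨j.val + 1, hj⟩) then (0:ℝ) else 1) ≤ hV i j := by
      intro i j hj
      refine (edgeLeast te tw (τ i j) (τ i ⟨j.val + 1, hj⟩)).2 ⟨hV0 i j, fun ℓ => ?_⟩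
      have := hHoriz i j hj ℓ
      simpa [hcast] using this
    have hHb : ∀ (i : Fin h) (j : Fin w) (hi : i.val + 1 < h),
        (if ts (τ i j) = tn (τ ⟨i.val + 1, hi⟩ j) then (0:ℝ) else 1) ≤ hH i j := by
      intro i j hi
      refine (edgeLeast ts tn (τ i j) (τ ⟨i.val + 1, hi⟩ j)).2 ⟨hH0 i j, fun ℓ => ?_⟩
      have := hVert i j hi ℓ
      simpa [hcast] using this
    have step : cspObjective hH hV ≤ (matchCount tn tw ts te τ : ℝ) := by
      rw [hmc τ, Nat.cast_add, cspObjective]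
      refine le_trans (add_le_add ?_ ?_) (le_of_eq (add_comm _ _))
      · refine sum_one_sub_le (fun p : Fin h × Fin w => p.2.val + 1 < w)
          (fun p : Fin h × Fin w => ∃ hj : p.2.val + 1 < w,
            te (τ p.1 p.2) = tw (τ p.1 ⟨p.2.val + 1, hj⟩)) _ _
          (fun p => by simp) (fun p => by simp)
          (fun p => hV p.1 p.2) (fun p hq => hq.1) (fun p => hV0 p.1 p.2)
          (fun p hr => ?_)
        have hb := hVb p.1 p.2 hr
        by_cases hm : te (τ p.1 p.2) = tw (τ p.1 ⟨p.2.val + 1, hr⟩)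
        · rw [if_pos ⟨hr, hm⟩]
          exact le_trans (le_of_eq (if_pos hm).symm) hb
        · rw [if_neg (fun ⟨_, hc⟩ => hm hc)]
          rw [if_neg hm] at hb; exact hb
      · refine sum_one_sub_le (fun p : Fin h × Fin w => p.1.val + 1 < h)
          (fun p : Fin h × Fin w => ∃ hi : p.1.val + 1 < h,
            ts (τ p.1 p.2) = tn (τ ⟨p.1.val + 1, hi⟩ p.2)) _ _
          (fun p => by simp) (fun p => by simp)
          (fun p => hH p.1 p.2) (fun p hq => hq.1) (fun p => hH0 p.1 p.2)
          (fun p hr => ?_)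
        have hb := hHb p.1 p.2 hr
        by_cases hm : ts (τ p.1 p.2) = tn (τ ⟨p.1.val + 1, hr⟩ p.2)
        · rw [if_pos ⟨hr, hm⟩]
          exact le_trans (le_of_eq (if_pos hm).symm) hb
        · rw [if_neg (fun ⟨_, hc⟩ => hm hc)]
          rw [if_neg hm] at hb; exact hb
    refine step.trans ?_
    exact_mod_cast Nat.cast_le.2 (Finset.le_sup' (f := fun τ : Fin h → Fin w → T =>
      matchCount tn tw ts te τ) (Finset.mem_univ τ))
end

section
/- Let M(T,h,w) denote the maximum cover size over all valid partial tilings of the h×w grid, and r(T,w) the maximum cover size over all valid partial tilings of the 1×w row. Then ⌈h/2⌉ · r(T,w) ≥ (1/2) · M(T,h,w); consequently, there exists a valid partial tiling of the h×w grid (namely, maximum row covers placed on the odd rows and voids on the even rows) whose cover size is at least half of M(T,h,w). -/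
open scoped Classical

/-- Validity of a partial row tiling. -/
def ValidRow {C T : Type} {w : ℕ} (tw te : T → C) (ρ : Fin w → Option T) : Prop :=
  ∀ (j : Fin w) (hj : j.val + 1 < w) (p q : T),
    ρ j = some p → ρ ⟨j.val + 1, hj⟩ = some q → te p = tw q

/-- Cover size of a partial row tiling. -/
def rowCover {T : Type} {w : ℕ} (ρ : Fin w → Option T) : ℕ :=
  (Finset.univ.filter fun j : Fin w => (ρ j).isSome).card

/-- r(T,w): the maximum cover size over all valid partial row tilings of width w. -/
noncomputable def maxRowCover {C T : Type} [Fintype T] (w : ℕ) (tw te : T → C) : ℕ :=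
  (Finset.univ.filter fun ρ : Fin w → Option T => ValidRow tw te ρ).sup rowCover

/-- M(T,h,w): the maximum cover size over all valid partial tilings of the h×w grid. -/
noncomputable def maxCover {C T : Type} [Fintype T] (h w : ℕ) (tn tw ts te : T → C) : ℕ :=
  (Finset.univ.filter fun τ : Fin h → Fin w → Option T =>
    ValidPartial tn tw ts te τ).sup coverSize

open Finset

/-!
Every row of a valid partial tiling is a valid partial row tiling, so M(T,h,w) ≤ h · r(T,w)
≤ 2⌈h/2⌉ · r(T,w). Conversely, a maximum row cover repeated on every other row (with void rows
in between, so that no vertical constraint arises) is a valid tiling of cover size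
⌈h/2⌉ · r(T,w) ≥ M(T,h,w)/2.
-/

lemma card_filter_even_range (n : ℕ) : #{i ∈ range n | Even i} = (n + 1) / 2 := by
  induction n with
  | zero => simp
  | succ n ih =>
    rw [range_add_one, filter_insert]
    split_ifs with hn
    · rw [card_insert_of_notMem (by simp), ih]
      have := Nat.even_iff.mp hn
      omega
    · rw [ih]
      have := Nat.odd_iff.mp (Nat.not_even_iff_odd.mp hn)
      omega

lemma card_filter_even_fin (n : ℕ) : #{i : Fin n | Even (i : ℕ)} = (n + 1) / 2 := by
  rw [card_filter, Fin.sum_univ_eq_sum_range (fun i => if Even i then 1 else 0),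
    ← card_filter, card_filter_even_range]

section Tiling

variable {C T : Type} {h w : ℕ}

lemma coverSize_eq_sum_rowCover (τ : Fin h → Fin w → Option T) :
    coverSize τ = ∑ i, rowCover (τ i) := by
  simp only [coverSize, rowCover, card_filter, Fintype.sum_prod_type]

lemma ValidPartial.validRow {tn tw ts te : T → C} {τ : Fin h → Fin w → Option T}
    (hτ : ValidPartial tn tw ts te τ) (i : Fin h) : ValidRow tw te (τ i) :=
  hτ.2 i

lemma validRow_none (tw te : T → C) : ValidRow tw te (fun _ : Fin w => none) := by
  intro _ _ _ _ hp
  cases hp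

/-- Rows are indexed from `0`, so the paper's odd rows are those of even index. -/
def oddRows (ρ : Fin w → Option T) : Fin h → Fin w → Option T :=
  fun i => if Even (i : ℕ) then ρ else fun _ => none

lemma ValidRow.validPartial_oddRows {tw te : T → C} {ρ : Fin w → Option T}
    (hρ : ValidRow tw te ρ) (tn ts : T → C) :
    ValidPartial tn tw ts te (oddRows (h := h) ρ) := by
  constructor
  · intro i j _ p q hp hq
    by_cases hi : Even (i : ℕ)
    · have : ¬ Even ((i : ℕ) + 1) := Nat.even_add_one.not.mpr (not_not.mpr hi)
      simp [oddRows, this] at hq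
    · simp [oddRows, hi] at hp
  · intro i
    by_cases hi : Even (i : ℕ)
    · simp only [oddRows, hi, if_true]
      exact hρ
    · simp only [oddRows, hi, if_false]
      exact validRow_none tw te

lemma coverSize_oddRows (ρ : Fin w → Option T) :
    coverSize (oddRows (h := h) ρ) = (h + 1) / 2 * rowCover ρ := by
  have hrow (i : Fin h) : rowCover (oddRows ρ i) = if Even (i : ℕ) then rowCover ρ else 0 := by
    by_cases hi : Even (i : ℕ) <;> simp [oddRows, rowCover, hi]
  rw [coverSize_eq_sum_rowCover, sum_congr rfl fun i _ => hrow i, ← sum_filter, sum_const,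
    card_filter_even_fin, smul_eq_mul]

variable [Fintype T]

lemma ValidRow.rowCover_le_maxRowCover {tw te : T → C} {ρ : Fin w → Option T}
    (hρ : ValidRow tw te ρ) : rowCover ρ ≤ maxRowCover w tw te :=
  le_sup (f := rowCover) (mem_filter.mpr ⟨mem_univ _, hρ⟩)

lemma exists_validRow_rowCover_eq_maxRowCover (tw te : T → C) :
    ∃ ρ : Fin w → Option T, ValidRow tw te ρ ∧ rowCover ρ = maxRowCover w tw te := by
  obtain ⟨ρ, hρ, hmax⟩ := exists_mem_eq_sup _
    ⟨_, mem_filter.mpr ⟨mem_univ _, validRow_none tw te⟩⟩ (rowCover (T := T) (w := w))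
  exact ⟨ρ, (mem_filter.mp hρ).2, hmax.symm⟩

lemma ValidPartial.coverSize_le {tn tw ts te : T → C} {τ : Fin h → Fin w → Option T}
    (hτ : ValidPartial tn tw ts te τ) : coverSize τ ≤ h * maxRowCover w tw te := by
  rw [coverSize_eq_sum_rowCover]
  calc ∑ i, rowCover (τ i) ≤ ∑ _i : Fin h, maxRowCover w tw te :=
        sum_le_sum fun i _ => (hτ.validRow i).rowCover_le_maxRowCover
    _ = h * maxRowCover w tw te := by simp

lemma maxCover_le (tn tw ts te : T → C) : maxCover h w tn tw ts te ≤ h * maxRowCover w tw te :=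
  Finset.sup_le fun _ hτ => (mem_filter.mp hτ).2.coverSize_le

end Tiling

/-- ⌈h/2⌉ · r(T,w) ≥ (1/2) · M(T,h,w), and consequently there exists a
valid partial tiling of the h×w grid whose cover size is at least half of M(T,h,w). -/
theorem stmt_8 {C T : Type} [Fintype T] {h w : ℕ} (tn tw ts te : T → C) :
    (1 / 2 : ℝ) * (maxCover h w tn tw ts te : ℝ) ≤
      (((h + 1) / 2 : ℕ) : ℝ) * (maxRowCover w tw te : ℝ) ∧
    ∃ τ : Fin h → Fin w → Option T,
      ValidPartial tn tw ts te τ ∧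
      (1 / 2 : ℝ) * (maxCover h w tn tw ts te : ℝ) ≤ (coverSize τ : ℝ) := by
  have hbound : maxCover h w tn tw ts te ≤ 2 * ((h + 1) / 2 * maxRowCover w tw te) :=
    calc maxCover h w tn tw ts te ≤ h * maxRowCover w tw te := maxCover_le tn tw ts te
      _ ≤ 2 * ((h + 1) / 2) * maxRowCover w tw te := by gcongr; omega
      _ = 2 * ((h + 1) / 2 * maxRowCover w tw te) := mul_assoc _ _ _
  have hhalf : (1 / 2 : ℝ) * (maxCover h w tn tw ts te : ℝ) ≤
      (((h + 1) / 2 : ℕ) : ℝ) * (maxRowCover w tw te : ℝ) := by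
    have : (maxCover h w tn tw ts te : ℝ) ≤
        2 * ((((h + 1) / 2 : ℕ) : ℝ) * maxRowCover w tw te) := by
      exact_mod_cast hbound
    linarith
  obtain ⟨ρ, hρ, hmax⟩ := exists_validRow_rowCover_eq_maxRowCover (w := w) tw te
  refine ⟨hhalf, oddRows ρ, hρ.validPartial_oddRows tn ts, ?_⟩
  rw [coverSize_oddRows, hmax]
  exact_mod_cast hhalf
end

section
/- Assume the tile set T is nonempty. If ρ is a valid partial tiling of the 1×w row whose cover size is maximal (equal to r(T,w)), then ρ contains no three consecutive void positions; more precisely, there is no position j such that the cell j is void and each of its horizontal neighbors (when it exists) is also void. Equivalently, if a valid partial row tiling has a void position all of whose existing horizontal neighbors are void, then there is a valid partial row tiling with strictly larger cover size. -/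
open scoped Classical

/-- for a nonempty tile set, a maximum row cover has no void position
all of whose existing horizontal neighbors are void; equivalently, a valid partial
row tiling with such an isolated void can be strictly improved. -/
theorem stmt_9 {C T : Type} [Fintype T] [Nonempty T] {w : ℕ} (tw te : T → C) :
    (∀ ρ : Fin w → Option T, ValidRow tw te ρ →
      rowCover ρ = maxRowCover w tw te →
      ¬ ∃ j : Fin w, ρ j = none ∧
        (∀ hj : j.val + 1 < w, ρ ⟨j.val + 1, hj⟩ = none) ∧
        (0 < j.val →
          ρ ⟨j.val - 1, Nat.lt_of_le_of_lt (Nat.sub_le _ _) j.2⟩ = none)) ∧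
    (∀ ρ : Fin w → Option T, ValidRow tw te ρ →
      (∃ j : Fin w, ρ j = none ∧
        (∀ hj : j.val + 1 < w, ρ ⟨j.val + 1, hj⟩ = none) ∧
        (0 < j.val →
          ρ ⟨j.val - 1, Nat.lt_of_le_of_lt (Nat.sub_le _ _) j.2⟩ = none)) →
      ∃ ρ' : Fin w → Option T, ValidRow tw te ρ' ∧ rowCover ρ < rowCover ρ') := by
  have key : ∀ ρ : Fin w → Option T, ValidRow tw te ρ →
      (∃ j : Fin w, ρ j = none ∧
        (∀ hj : j.val + 1 < w, ρ ⟨j.val + 1, hj⟩ = none) ∧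
        (0 < j.val →
          ρ ⟨j.val - 1, Nat.lt_of_le_of_lt (Nat.sub_le _ _) j.2⟩ = none)) →
      ∃ ρ' : Fin w → Option T, ValidRow tw te ρ' ∧ rowCover ρ < rowCover ρ' := by
    rintro ρ hv ⟨j, h0, h1, h2⟩
    obtain ⟨t⟩ := ‹Nonempty T›
    refine ⟨Function.update ρ j (some t), ?_, ?_⟩
    · intro j' hj p q hp hq
      by_cases e1 : j' = j
      · exfalso
        subst e1
        have hne : (⟨j'.val + 1, hj⟩ : Fin w) ≠ j' := by
          intro h
          have := congrArg Fin.val h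
          simp at this
        rw [Function.update_of_ne hne] at hq
        rw [h1 hj] at hq
        exact nomatch hq
      · by_cases e2 : (⟨j'.val + 1, hj⟩ : Fin w) = j
        · exfalso
          have hjval : j.val = j'.val + 1 := by
            have := congrArg Fin.val e2; simpa using this.symm
          have hpos : 0 < j.val := by omega
          have : ρ j' = none := by
            have := h2 hpos
            have hj' : (⟨j.val - 1, Nat.lt_of_le_of_lt (Nat.sub_le _ _) j.2⟩ : Fin w) = j' := by
              apply Fin.ext; simp; omega
            rwa [hj'] at this
          rw [Function.update_of_ne e1, this] at hp
          exact nomatch hp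
        · rw [Function.update_of_ne e1] at hp
          rw [Function.update_of_ne e2] at hq
          exact hv j' hj p q hp hq
    · apply Finset.card_lt_card
      constructor
      · intro x hx
        simp only [Finset.mem_filter, Finset.mem_univ, true_and] at hx ⊢
        by_cases e : x = j
        · rw [e, h0] at hx; simp at hx
        · rwa [Function.update_of_ne e]
      · intro hsub
        have := hsub (by
          simp only [Finset.mem_filter, Finset.mem_univ, true_and,
            Function.update_self, Option.isSome_some] : j ∈ Finset.univ.filter
              fun x => ((Function.update ρ j (some t)) x).isSome)
        simp only [Finset.mem_filter, Finset.mem_univ, true_and, h0] at this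
        simp at this
  refine ⟨?_, key⟩
  intro ρ hv hmax hex
  obtain ⟨ρ', hv', hlt⟩ := key ρ hv hex
  have hle : rowCover ρ' ≤ maxRowCover w tw te := by
    apply Finset.le_sup
    simp [hv']
  omega
end

section
/- Suppose T is nonempty and: (i) for every tile k ∈ T there is a tile a ∈ T with w(a) = e(k) (every tile can be continued to the east); (ii) for every tile k ∈ T there is a tile b ∈ T with n(b) = s(k) (every tile admits a tile fitting below it); and (iii) for every tile k ∈ T there is a tile d ∈ T with s(d) = n(k) (every tile admits a tile fitting above it). These conditions hold in particular when every state of the transducer graph and of the dual transducer graph of T lies on a directed cycle. Then for all h, w ≥ 1 there exists a valid partial tiling of the h×w grid whose cover size is at least (2/3) · h · w. -/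
open scoped Classical

lemma aux_odd_le_even (w : ℕ) :
    (Finset.univ.filter fun j : Fin w => j.val % 2 = 1).card ≤
    (Finset.univ.filter fun j : Fin w => j.val % 2 = 0).card := by
  classical
  apply Finset.card_le_card_of_injOn
      (fun j : Fin w => ⟨j.val - 1, lt_of_le_of_lt (Nat.sub_le _ _) j.isLt⟩)
  · intro a ha
    simp only [Finset.mem_coe, Finset.mem_filter, Finset.mem_univ, true_and] at ha ⊢
    omega
  · intro a ha b hb hab
    simp only [Finset.coe_filter, Set.mem_setOf_eq, Finset.mem_univ, true_and] at ha hb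
    have := congrArg Fin.val hab
    simp only at this
    exact Fin.ext (by omega)

lemma aux_even_add_odd (w : ℕ) :
    (Finset.univ.filter fun j : Fin w => j.val % 2 = 0).card +
    (Finset.univ.filter fun j : Fin w => j.val % 2 = 1).card = w := by
  classical
  have h := Finset.card_filter_add_card_filter_not
      (s := (Finset.univ : Finset (Fin w))) (p := fun j => j.val % 2 = 0)
  rw [Finset.card_univ, Fintype.card_fin] at h
  have h2 : (Finset.univ.filter fun j : Fin w => ¬ (j.val % 2 = 0)) =
      Finset.univ.filter fun j : Fin w => j.val % 2 = 1 := by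
    ext j; simp only [Finset.mem_filter, Finset.mem_univ, true_and]; omega
  rw [h2] at h
  exact h

lemma aux_sum_g (w N1 N2 : ℕ) (h1 : N1 + N2 = w) (h2 : w ≤ 2 * N1) :
    ∀ h : ℕ, 2 * (h * w) ≤
      3 * ∑ i ∈ Finset.range h, (if i % 3 = 0 then w else if i % 3 = 1 then N1 else N2) := by
  intro h
  induction h using Nat.strong_induction_on with
  | _ h ih =>
    match h with
    | 0 => simp
    | 1 => simp; omega
    | 2 =>
      rw [Finset.sum_range_succ, Finset.sum_range_succ]
      norm_num
      omega
    | (m+3) =>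
      rw [Finset.sum_range_succ, Finset.sum_range_succ, Finset.sum_range_succ]
      have IH := ih m (by omega)
      have hsum : (if m % 3 = 0 then w else if m % 3 = 1 then N1 else N2)
          + (if (m+1) % 3 = 0 then w else if (m+1) % 3 = 1 then N1 else N2)
          + (if (m+2) % 3 = 0 then w else if (m+2) % 3 = 1 then N1 else N2) = 2 * w := by
        have h3 : m % 3 = 0 ∨ m % 3 = 1 ∨ m % 3 = 2 := by omega
        rcases h3 with h3 | h3 | h3
        · have e1 : (m+1) % 3 = 1 := by omega
          have e2 : (m+2) % 3 = 2 := by omega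
          simp [h3, e1, e2]; omega
        · have e1 : (m+1) % 3 = 2 := by omega
          have e2 : (m+2) % 3 = 0 := by omega
          simp [h3, e1, e2]; omega
        · have e1 : (m+1) % 3 = 0 := by omega
          have e2 : (m+2) % 3 = 1 := by omega
          simp [h3, e1, e2]; omega
      have hexp : (m+3)*w = m*w + 3*w := by ring
      omega


/-- if the tile set is nonempty and every tile can be continued to the
east, admits a tile fitting below it, and admits a tile fitting above it (as holds
when every state of the transducer and dual transducer graphs lies on a cycle), then
for all h, w ≥ 1 there is a valid partial tiling covering at least 2/3 of the cells. -/
theorem stmt_11 {C T : Type} [Fintype T] [Nonempty T] {h w : ℕ}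
    (tn tw ts te : T → C)
    (hEast : ∀ k : T, ∃ a : T, tw a = te k)
    (hBelow : ∀ k : T, ∃ b : T, tn b = ts k)
    (hAbove : ∀ k : T, ∃ d : T, ts d = tn k)
    (hh : 1 ≤ h) (hw : 1 ≤ w) :
    ∃ τ : Fin h → Fin w → Option T,
      ValidPartial tn tw ts te τ ∧
      (2 / 3 : ℝ) * ((h : ℝ) * (w : ℝ)) ≤ (coverSize τ : ℝ) := by
  classical
  choose east hE using hEast
  choose bel hB using hBelow
  choose abv hA using hAbove
  obtain ⟨t₀⟩ := ‹Nonempty T›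
  set A : ℕ → T := fun j => east^[j] t₀ with hAdef
  have hAsucc : ∀ j, A (j+1) = east (A j) := fun j => Function.iterate_succ_apply' east j t₀
  set F : ℕ → ℕ → Option T := fun i j =>
    if i % 3 = 0 then some (A j)
    else if i % 3 = 1 then (if j % 2 = 0 then some (bel (A j)) else none)
    else (if j % 2 = 1 then some (abv (A j)) else none) with hFdef
  refine ⟨fun i j => F i.val j.val, ⟨?_, ?_⟩, ?_⟩
  · -- vertical validity
    intro i j hi p q hp hq
    simp only [hFdef] at hp hq
    have h3 : i.val % 3 = 0 ∨ i.val % 3 = 1 ∨ i.val % 3 = 2 := by omega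
    rcases h3 with h3 | h3 | h3
    · have h4 : (i.val + 1) % 3 = 1 := by omega
      by_cases hj2 : j.val % 2 = 0
      · simp only [h3, h4, hj2, if_true, if_pos, Option.some.injEq] at hp hq
        norm_num at hq
        subst hp; subst hq
        exact (hB _).symm
      · simp only [h3, h4, hj2] at hp hq
        norm_num [hj2] at hq
        cases hq
    · have h4 : (i.val + 1) % 3 = 2 := by omega
      by_cases hj2 : j.val % 2 = 0
      · have : ¬ (j.val % 2 = 1) := by omega
        simp only [h3, h4] at hq
        norm_num [this] at hq
        cases hq
      · simp only [h3] at hp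
        norm_num [hj2] at hp
        cases hp
    · have h4 : (i.val + 1) % 3 = 0 := by omega
      by_cases hj2 : j.val % 2 = 1
      · simp only [h3, h4, hj2] at hp hq
        norm_num at hp hq
        subst hp; subst hq
        exact hA _
      · simp only [h3] at hp
        norm_num [hj2] at hp
        cases hp
  · -- horizontal validity
    intro i j hj p q hp hq
    simp only [hFdef] at hp hq
    have h3 : i.val % 3 = 0 ∨ i.val % 3 = 1 ∨ i.val % 3 = 2 := by omega
    rcases h3 with h3 | h3 | h3
    · simp only [h3, if_true, Option.some.injEq] at hp hq
      norm_num at hp hq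
      subst hp; subst hq
      rw [hAsucc j.val]
      exact (hE _).symm
    · by_cases hj2 : j.val % 2 = 0
      · have : ¬ ((j.val + 1) % 2 = 0) := by omega
        simp only [h3] at hq
        norm_num [this] at hq
        cases hq
      · simp only [h3] at hp
        norm_num [hj2] at hp
        cases hp
    · by_cases hj2 : j.val % 2 = 1
      · have : ¬ ((j.val + 1) % 2 = 1) := by omega
        simp only [h3] at hq
        norm_num [h3, this] at hq
        cases hq
      · simp only [h3] at hp
        norm_num [h3, hj2] at hp
        cases hp
  · -- counting
    set N1 := (Finset.univ.filter fun j : Fin w => j.val % 2 = 0).card with hN1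
    set N2 := (Finset.univ.filter fun j : Fin w => j.val % 2 = 1).card with hN2
    have hEO : N1 + N2 = w := aux_even_add_odd w
    have hOE : N2 ≤ N1 := aux_odd_le_even w
    have hrow : ∀ n : ℕ,
        (Finset.univ.filter fun j : Fin w => (F n j.val).isSome).card =
        (if n % 3 = 0 then w else if n % 3 = 1 then N1 else N2) := by
      intro n
      have h3 : n % 3 = 0 ∨ n % 3 = 1 ∨ n % 3 = 2 := by omega
      rcases h3 with h3 | h3 | h3
      · simp [hFdef, h3, Finset.filter_true_of_mem]
      · simp only [h3, if_false, if_true]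
        norm_num
        have : (Finset.univ.filter fun j : Fin w => (F n j.val).isSome) =
            Finset.univ.filter fun j : Fin w => j.val % 2 = 0 := by
          ext j
          by_cases hj2 : j.val % 2 = 0 <;> simp [hFdef, h3, hj2]
        rw [this]
      · simp only [h3]
        norm_num
        have : (Finset.univ.filter fun j : Fin w => (F n j.val).isSome) =
            Finset.univ.filter fun j : Fin w => j.val % 2 = 1 := by
          ext j
          by_cases hj2 : j.val % 2 = 1 <;> simp [hFdef, h3, hj2]
        rw [this]
    have hcov : coverSize (fun i : Fin h => fun j : Fin w => F i.val j.val) =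
        ∑ i ∈ Finset.range h, (if i % 3 = 0 then w else if i % 3 = 1 then N1 else N2) := by
      rw [coverSize, Finset.card_filter, Fintype.sum_prod_type]
      have : ∀ i : Fin h, (∑ j : Fin w, if (F i.val j.val).isSome then 1 else 0) =
          (Finset.univ.filter fun j : Fin w => (F i.val j.val).isSome).card := by
        intro i
        rw [Finset.card_filter]
      calc (∑ i : Fin h, ∑ j : Fin w, if (F i.val j.val).isSome then 1 else 0)
          = ∑ i : Fin h, (if i.val % 3 = 0 then w else if i.val % 3 = 1 then N1 else N2) := by
            refine Finset.sum_congr rfl fun i _ => ?_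
            rw [this i, hrow i.val]
        _ = _ := Fin.sum_univ_eq_sum_range (fun n => if n % 3 = 0 then w else if n % 3 = 1 then N1 else N2) h
    have key : 2 * (h * w) ≤ 3 * coverSize (fun i : Fin h => fun j : Fin w => F i.val j.val) := by
      rw [hcov]
      exact aux_sum_g w N1 N2 hEO (by omega) h
    have keyR : (2 : ℝ) * (h * w) ≤ 3 * (coverSize (fun i : Fin h => fun j : Fin w => F i.val j.val) : ℝ) := by
      exact_mod_cast key
    linarith
end

section
/- Let x : Fin h × Fin w × T → {0,1} satisfy, for every color ℓ, the vertical balance equalities ∑_{k, s(k)=ℓ} x(i,j,k) = ∑_{k, n(k)=ℓ} x(i+1,j,k) for all vertically consecutive cells and the horizontal balance equalities ∑_{k, e(k)=ℓ} x(i,j,k) = ∑_{k, w(k)=ℓ} x(i,j+1,k) for all horizontally consecutive cells, together with ∑_{k∈T} x(i,j,k) = 1 for every cell in the first row and in the first column. Then ∑_{k∈T} x(i,j,k) = 1 for every cell (i,j) of the grid; that is, the one-tile-per-cell constraints propagate from the boundary through the color-balance adjacency constraints. -/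
/-! Summing a colour-balance equality over all colours shows that two consecutive cells in a
column carry the same total `∑ k, x i j k`. The total is therefore constant down each column,
and equals `1` there because it is `1` in the first row. -/

open Finset

theorem sum_eq_sum_of_forall_color_sum_eq {ι κ C M : Type*} [Fintype ι] [Fintype κ]
    [DecidableEq C] [AddCommMonoid M] (c : ι → C) (d : κ → C) (f : ι → M) (g : κ → M)
    (hbal : ∀ ℓ, (∑ i, if c i = ℓ then f i else 0) = ∑ k, if d k = ℓ then g k else 0) :
    ∑ i, f i = ∑ k, g k := by
  set S : Finset C := univ.image c ∪ univ.image d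
  have hc : ∀ i ∈ (univ : Finset ι), c i ∈ S := fun i _ => by simp [S]
  have hd : ∀ k ∈ (univ : Finset κ), d k ∈ S := fun k _ => by simp [S]
  rw [← sum_fiberwise_of_maps_to hc, ← sum_fiberwise_of_maps_to hd]
  refine sum_congr rfl fun ℓ _ => ?_
  simpa only [sum_filter] using hbal ℓ

theorem Fin.forall_of_zero_of_succ {n : ℕ} {P : Fin n → Prop}
    (hzero : ∀ i : Fin n, i.val = 0 → P i)
    (hsucc : ∀ (i : Fin n) (hi : i.val + 1 < n), P i → P ⟨i.val + 1, hi⟩) :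
    ∀ i, P i := by
  rintro ⟨m, hm⟩
  induction m with
  | zero => exact hzero _ rfl
  | succ m ih => exact hsucc ⟨m, by omega⟩ hm (ih (by omega))

theorem stmt_17_general {C T : Type} [Fintype T] [DecidableEq C]
    {h w : ℕ} (tn ts : T → C)
    (x : Fin h → Fin w → T → ℕ)
    (hvert : ∀ (i : Fin h) (j : Fin w) (hi : i.val + 1 < h) (ℓ : C),
      (∑ k : T, if ts k = ℓ then x i j k else 0) =
        ∑ k : T, if tn k = ℓ then x ⟨i.val + 1, hi⟩ j k else 0)
    (hrow : ∀ (i : Fin h) (j : Fin w), i.val = 0 → (∑ k : T, x i j k) = 1) :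
    ∀ (i : Fin h) (j : Fin w), (∑ k : T, x i j k) = 1 := by
  intro i j
  have total_succ : ∀ (i : Fin h) (hi : i.val + 1 < h),
      ∑ k, x i j k = ∑ k, x ⟨i.val + 1, hi⟩ j k := fun i hi =>
    sum_eq_sum_of_forall_color_sum_eq ts tn _ _ (hvert i j hi)
  refine Fin.forall_of_zero_of_succ (P := fun i => ∑ k, x i j k = 1)
    (fun i hi => hrow i j hi) (fun i hi hsum => ?_) i
  rwa [← total_succ i hi]

/-- the one-tile-per-cell constraints propagate from the first row and
first column through the color-balance adjacency constraints to every cell. -/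
theorem stmt_17 {C T : Type} [Fintype T] [DecidableEq C]
    {h w : ℕ} (tn tw ts te : T → C)
    (x : Fin h → Fin w → T → ℕ)
    (hx : ∀ i j k, x i j k = 0 ∨ x i j k = 1)
    (hvert : ∀ (i : Fin h) (j : Fin w) (hi : i.val + 1 < h) (ℓ : C),
      (∑ k : T, if ts k = ℓ then x i j k else 0) =
        ∑ k : T, if tn k = ℓ then x ⟨i.val + 1, hi⟩ j k else 0)
    (hhor : ∀ (i : Fin h) (j : Fin w) (hj : j.val + 1 < w) (ℓ : C),
      (∑ k : T, if te k = ℓ then x i j k else 0) =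
        ∑ k : T, if tw k = ℓ then x i ⟨j.val + 1, hj⟩ k else 0)
    (hrow : ∀ (i : Fin h) (j : Fin w), i.val = 0 → (∑ k : T, x i j k) = 1)
    (hcol : ∀ (i : Fin h) (j : Fin w), j.val = 0 → (∑ k : T, x i j k) = 1) :
    ∀ (i : Fin h) (j : Fin w), (∑ k : T, x i j k) = 1 :=
  stmt_17_general tn ts x hvert hrow
end
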